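/- Let n ≥ 1, a ∈ ℝⁿ and m₁,…,m_{2n} ∈ ℝ, assume Ξ(a) is invertible, let Q ∈ ℝ^{2n×n} have j-th row Qⱼ = Γ Ξ(a)^{−1} Φ(a)^{j−1}, let ξ ∈ ℝⁿ and θ = Q ξ, and assume additionally that the Hankel matrix Θ(θ) is invertible. Then the parameter vector is recovered explicitly as a = −Θ(θ)^{−1} (θ_{n+1},…,θ_{2n})ᵀ. -/
import Mathlib


open Matrix

/-- The `n × n` real companion matrix `Φ(a)`: superdiagonal ones,
last row `(-a₁, …, -aₙ)`, all other entries `0`. -/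
noncomputable def companion (n : ℕ) (a : Fin n → ℝ) : Matrix (Fin n) (Fin n) ℝ :=
  Matrix.of fun i j =>
    if (i : ℕ) = n - 1 then -a j
    else if (j : ℕ) = (i : ℕ) + 1 then 1 else 0

/-- The row vector `Γ = (1, 0, …, 0) ∈ ℝ^{1×n}`. -/
noncomputable def Gam (n : ℕ) : Matrix (Fin 1) (Fin n) ℝ :=
  Matrix.of fun _ j => if (j : ℕ) = 0 then 1 else 0

/-- `Ξ(a) = Φ(a)^{2n} + Σ_{j=1}^{2n} mⱼ Φ(a)^{j-1}`. -/
noncomputable def Xi (n : ℕ) (a : Fin n → ℝ) (m : Fin (2*n) → ℝ) : Matrix (Fin n) (Fin n) ℝ :=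
  companion n a ^ (2*n) + ∑ j : Fin (2*n), m j • companion n a ^ (j : ℕ)

/-- The `2n × n` matrix `Q` whose `j`-th row is `Qⱼ = Γ Ξ(a)⁻¹ Φ(a)^{j-1}`. -/
noncomputable def Qmat (n : ℕ) (a : Fin n → ℝ) (m : Fin (2*n) → ℝ) :
    Matrix (Fin (2*n)) (Fin n) ℝ :=
  Matrix.of fun j k => (Gam n * (Xi n a m)⁻¹ * companion n a ^ (j : ℕ)) 0 k

/-- The `n × n` Hankel matrix `Θ(θ)` with entries `Θ(θ)_{i,j} = θ_{i+j-1}` (1-based). -/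
noncomputable def hankel (n : ℕ) (θ : Fin (2*n) → ℝ) : Matrix (Fin n) (Fin n) ℝ :=
  Matrix.of fun i j => θ ⟨(i : ℕ) + (j : ℕ), by omega⟩


lemma companion_row_succ {n : ℕ} (a : Fin n → ℝ) (i : Fin n) (hi : (i : ℕ) + 1 < n) :
    companion n a i = Pi.single (⟨(i : ℕ) + 1, hi⟩ : Fin n) 1 := by
  funext j
  simp only [companion, Matrix.of_apply, Pi.single_apply]
  rw [if_neg (by omega)]
  by_cases h : (j : ℕ) = (i : ℕ) + 1
  · rw [if_pos h, if_pos (Fin.ext h)]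
  · rw [if_neg h, if_neg (fun hc => h (by rw [hc]))]

lemma companion_row_last {n : ℕ} (hn : 0 < n) (a : Fin n → ℝ) :
    companion n a ⟨n - 1, by omega⟩ = -a := by
  funext j
  simp [companion]

lemma companion_pow_row_zero {n : ℕ} (hn : 0 < n) (a : Fin n → ℝ) (k : ℕ) (hk : k < n) :
    (companion n a ^ k) ⟨0, hn⟩ = Pi.single (⟨k, hk⟩ : Fin n) 1 := by
  induction k with
  | zero =>
    funext j
    simp [Matrix.one_apply, Pi.single_apply, eq_comm]
  | succ k ih =>
    funext j
    rw [pow_succ, Matrix.mul_apply, ih (by omega)]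
    simp only [Pi.single_apply, ite_mul, one_mul, zero_mul]
    rw [Finset.sum_ite_eq' Finset.univ (⟨k, by omega⟩ : Fin n)
      (fun l => companion n a l j)]
    rw [if_pos (Finset.mem_univ _),
      companion_row_succ a (⟨k, by omega⟩ : Fin n) (by simpa using hk)]
    simp [Pi.single_apply]

lemma companion_pow_n_row_zero {n : ℕ} (hn : 0 < n) (a : Fin n → ℝ) :
    (companion n a ^ n) ⟨0, hn⟩ = -a := by
  funext j
  rw [show companion n a ^ n = companion n a ^ (n-1) * companion n a by
    rw [← pow_succ]; congr 1; omega]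
  rw [Matrix.mul_apply, companion_pow_row_zero hn a (n-1) (by omega)]
  simp only [Pi.single_apply, ite_mul, one_mul, zero_mul]
  rw [Finset.sum_ite_eq' Finset.univ (⟨n-1, by omega⟩ : Fin n)
    (fun l => companion n a l j)]
  rw [if_pos (Finset.mem_univ _), companion_row_last hn a]

/-- Cayley–Hamilton for the companion matrix. -/
lemma companion_cayley {n : ℕ} (hn : 0 < n) (a : Fin n → ℝ) :
    companion n a ^ n + ∑ j : Fin n, a j • companion n a ^ (j : ℕ) = 0 := by
  set Φ := companion n a with hΦ
  set M := Φ ^ n + ∑ j : Fin n, a j • Φ ^ (j : ℕ) with hM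
  have hrow0 : ∀ j, M ⟨0, hn⟩ j = 0 := by
    intro j
    simp only [hM, Matrix.add_apply, Matrix.sum_apply, Matrix.smul_apply]
    rw [show (Φ ^ n) ⟨0, hn⟩ j = (-a) j from congrFun (companion_pow_n_row_zero hn a) j]
    have h2 : ∀ k : Fin n, a k • (Φ ^ (k : ℕ)) ⟨0, hn⟩ j
        = a k * (Pi.single k (1:ℝ) : Fin n → ℝ) j := by
      intro k
      rw [show (Φ ^ (k:ℕ)) ⟨0, hn⟩ = Pi.single (⟨(k:ℕ), k.isLt⟩ : Fin n) (1:ℝ) from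
        companion_pow_row_zero hn a (k:ℕ) k.isLt, Fin.eta]
      rfl
    simp only [h2, Pi.single_apply, mul_ite, mul_one, mul_zero]
    rw [Finset.sum_ite_eq Finset.univ j a]
    simp
  have hcomm : Commute Φ M := by
    apply Commute.add_right
    · exact (Commute.refl Φ).pow_right n
    · exact Commute.sum_right _ _ _ fun k _ =>
        ((Commute.refl Φ).pow_right (k : ℕ)).smul_right (a k)
  ext i j
  have h1 : M i j = (Φ ^ (i : ℕ) * M) ⟨0, hn⟩ j := by
    rw [Matrix.mul_apply, companion_pow_row_zero hn a (i : ℕ) i.isLt]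
    simp only [Pi.single_apply, ite_mul, one_mul, zero_mul]
    rw [Finset.sum_ite_eq' Finset.univ (⟨(i:ℕ), i.isLt⟩ : Fin n) (fun l => M l j)]
    simp
  rw [Matrix.zero_apply, h1, (hcomm.pow_left (i : ℕ)).eq, Matrix.mul_apply]
  simp [hrow0]

/-- for `θ = Q ξ`, if additionally the Hankel matrix `Θ(θ)` is invertible,
the parameter vector is recovered explicitly: `a = −Θ(θ)⁻¹ (θ_{n+1}, …, θ_{2n})ᵀ`. -/
theorem statement9 (n : ℕ) (hn : 1 ≤ n) (a : Fin n → ℝ) (m : Fin (2*n) → ℝ)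
    (hXi : IsUnit (Xi n a m)) (ξ : Fin n → ℝ) (θ : Fin (2*n) → ℝ)
    (hθ : θ = Qmat n a m *ᵥ ξ)
    (hHank : IsUnit (hankel n θ)) :
    a = -((hankel n θ)⁻¹ *ᵥ fun j : Fin n => θ ⟨n + (j : ℕ), by omega⟩) := by
  set Φ := companion n a with hΦ
  set W := Gam n * (Xi n a m)⁻¹ with hW
  have hθk : ∀ p : Fin (2*n), θ p = ∑ l, (W * Φ ^ (p : ℕ)) 0 l * ξ l := by
    intro p
    rw [hθ]
    simp [Qmat, Matrix.mulVec, dotProduct, ← hW, ← hΦ]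
  have hzero : ∀ i : Fin n, ∀ l,
      (W * Φ ^ (n + (i : ℕ))) 0 l
        + ∑ j : Fin n, a j * (W * Φ ^ ((i : ℕ) + (j : ℕ))) 0 l = 0 := by
    intro i l
    have h0 : W * Φ ^ (i : ℕ) * (Φ ^ n + ∑ j : Fin n, a j • Φ ^ (j : ℕ)) = 0 := by
      rw [companion_cayley (by omega) a, Matrix.mul_zero]
    rw [Matrix.mul_add, Matrix.mul_sum] at h0
    have h1 := congrFun (congrFun h0 0) l
    simp only [Matrix.add_apply, Matrix.sum_apply, Matrix.zero_apply,
      Matrix.mul_smul, Matrix.smul_apply, smul_eq_mul, Matrix.mul_assoc, ← pow_add] at h1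
    rw [Nat.add_comm (i : ℕ) n] at h1
    simpa only [Matrix.mul_assoc, ← pow_add] using h1
  have hHa : hankel n θ *ᵥ a = -(fun j : Fin n => θ ⟨n + (j : ℕ), by omega⟩) := by
    funext i
    simp only [hankel, Matrix.mulVec, dotProduct, Matrix.of_apply, Pi.neg_apply]
    calc ∑ j : Fin n, θ ⟨(i:ℕ) + (j:ℕ), by omega⟩ * a j
        = ∑ j : Fin n, (∑ l, (W * Φ ^ ((i:ℕ)+(j:ℕ))) 0 l * ξ l) * a j := by
          refine Finset.sum_congr rfl fun j _ => ?_
          rw [hθk]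
      _ = ∑ l, (∑ j : Fin n, a j * (W * Φ ^ ((i:ℕ)+(j:ℕ))) 0 l) * ξ l := by
          simp only [Finset.sum_mul]
          rw [Finset.sum_comm]
          refine Finset.sum_congr rfl fun l _ => ?_
          refine Finset.sum_congr rfl fun j _ => ?_
          ring
      _ = ∑ l, (-((W * Φ ^ (n + (i:ℕ))) 0 l)) * ξ l := by
          refine Finset.sum_congr rfl fun l _ => ?_
          rw [eq_neg_of_add_eq_zero_right (hzero i l)]
      _ = -∑ l, (W * Φ ^ (n + (i:ℕ))) 0 l * ξ l := by
          simp [neg_mul]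
      _ = -θ ⟨n + (i:ℕ), by omega⟩ := by rw [hθk]
  have hdet : IsUnit (hankel n θ).det := (Matrix.isUnit_iff_isUnit_det _).mp hHank
  calc a = (hankel n θ)⁻¹ *ᵥ (hankel n θ *ᵥ a) := by
        rw [Matrix.mulVec_mulVec, Matrix.nonsing_inv_mul _ hdet, Matrix.one_mulVec]
    _ = -((hankel n θ)⁻¹ *ᵥ fun j : Fin n => θ ⟨n + (j : ℕ), by omega⟩) := by
        rw [hHa, Matrix.mulVec_neg]
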